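/- Assume: (i) every nodal concentration value is strictly positive (c⁺_{j−1/2} > 0 and c⁻_{j+1/2} > 0 for every cell j); (ii) α > max{u⁺_{j+1/2}, 0} for every interior node index 1 ≤ j ≤ N−1; (iii) α̃ > D_M/2 where D_M is the maximum of all the values D⁻_{j+1/2}, D⁺_{j+1/2} over 1 ≤ j ≤ N−1; (iv) 6αλ ≤ Φ_m where Φ_m = min over 1 ≤ j ≤ N−1 of Φ_{j+1/2}, and 6λ(α − u⁺_{j+1/2}) ≤ Φ_{j+1/2} for every 1 ≤ j ≤ N−1; (v) Λ(3D⁻_{j+1/2} + 6α̃) ≤ Φ_{j−1/2} for 1 ≤ j ≤ N−1, Λ(3D⁺_{j−1/2} + 6α̃) ≤ Φ_{j+1/2} for 2 ≤ j ≤ N, and 6Λα̃ ≤ Φ_{j+1/2} for every 0 ≤ j ≤ N; (vi) for every cell j and every Gauss index i ∈ {1,2}: z₁ ≥ 0, 6Δt·z₁·max{P_j^i, 0} ≤ 1, if q_j^i ≥ 0 then c̃_j^i ≥ 0, and if q_j^i < 0 then c̃_j^i = c(x_j^i) and 6Δt(−q_j^i) < min{Φ_{j−1/2}, Φ_{j+1/2}}.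 Then the Euler-forward cell-average update satisfies r̄_j^{new} > 0 for every cell j = 1,…,N. -/

import Mathlib

/-!
Split `r̄_j` into three equal parts `(r⁺_{j-1/2} + r⁻_{j+1/2})/6`, one absorbing each of the
convective, diffusive and source contributions. In each flux contribution the traces of the
neighbouring cells enter with nonnegative coefficients (this is what `α > max{u⁺, 0}` and
`α̃ > D/2` buy), so dropping them leaves a lower bound linear in `c⁺_{j-1/2}` and `c⁻_{j+1/2}`,
whose coefficients the CFL conditions bound by `Φ/6` at the respective node. For diffusion both
faces of the cell draw on the budget `Φ/6` of a node: the far face takes `Λα̃`, the near one the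
rest. By the Gauss quadrature `r(x_j^1) + r(x_j^2) = 2 r̄_j` the source part is
`∑_i r(x_j^i)/6`, and each Gauss-point term stays positive because a sink withdraws
`c(x_j^i) ≤ r(x_j^i)/Φ_min`.
-/

noncomputable section

namespace DG1D

/-- Gauss constant `μ₁ = (3+√3)/6`. -/
def mu1 : ℝ := (3 + Real.sqrt 3) / 6

/-- Gauss constant `μ₂ = (3-√3)/6`. -/
def mu2 : ℝ := (3 - Real.sqrt 3) / 6

/-- Cell average `r̄_j = (r⁺_{j-1/2} + r⁻_{j+1/2})/2`.  Here `Φ j` denotes the nodal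
porosity value `Φ_{j+1/2}` (so `Φ (j-1)` is `Φ_{j-1/2}`), `cP j` denotes the left-node
concentration trace `c⁺_{j-1/2}` of cell `j`, and `cM j` denotes the right-node trace
`c⁻_{j+1/2}` of cell `j`. -/
def rbar (Φ cP cM : ℕ → ℝ) (j : ℕ) : ℝ :=
  (cP j * Φ (j - 1) + cM j * Φ j) / 2

/-- Convective flux `ûc_{j+1/2} = u⁺_{j+1/2}·c⁺_{j+1/2} - α·[c]_{j+1/2}` at the interior
node `j+1/2` (`u j` denotes `u⁺_{j+1/2}`; `c⁺_{j+1/2} = cP (j+1)`, `c⁻_{j+1/2} = cM j`). -/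
def uc (u cP cM : ℕ → ℝ) (α : ℝ) (j : ℕ) : ℝ :=
  u j * cP (j + 1) - α * (cP (j + 1) - cM j)

/-- Diffusive flux `F̂_{j+1/2} = (D⁻·(c_x)⁻ + D⁺·(c_x)⁺)/2 + (α̃/Δx)·[c]_{j+1/2}` at the
interior node `j+1/2`, with `(c_x)⁻_{j+1/2} = (c⁻_{j+1/2} - c⁺_{j-1/2})/Δx` and
`(c_x)⁺_{j+1/2} = (c⁻_{j+3/2} - c⁺_{j+1/2})/Δx`. -/
def Fhat (Dm Dp cP cM : ℕ → ℝ) (αt Δx : ℝ) (j : ℕ) : ℝ :=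
  (Dm j * ((cM j - cP j) / Δx) + Dp j * ((cM (j + 1) - cP (j + 1)) / Δx)) / 2
    + (αt / Δx) * (cP (j + 1) - cM j)

/-- Value of the linear function `r` at Gauss point `i` of cell `j`:
`r(x_j^1) = μ₁·r⁺_{j-1/2} + μ₂·r⁻_{j+1/2}`, `r(x_j^2) = μ₂·r⁺_{j-1/2} + μ₁·r⁻_{j+1/2}`. -/
def rG (Φ cP cM : ℕ → ℝ) (j : ℕ) (i : Fin 2) : ℝ :=
  if i = 0 then mu1 * (cP j * Φ (j - 1)) + mu2 * (cM j * Φ j)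
  else mu2 * (cP j * Φ (j - 1)) + mu1 * (cM j * Φ j)

/-- Value of the linear function `c` at Gauss point `i` of cell `j`. -/
def cG (cP cM : ℕ → ℝ) (j : ℕ) (i : Fin 2) : ℝ :=
  if i = 0 then mu1 * cP j + mu2 * cM j else mu2 * cP j + mu1 * cM j

/-- Value of the linear interpolant of `Φ` at Gauss point `i` of cell `j`. -/
def phiG (Φ : ℕ → ℝ) (j : ℕ) (i : Fin 2) : ℝ :=
  if i = 0 then mu1 * Φ (j - 1) + mu2 * Φ j else mu2 * Φ (j - 1) + mu1 * Φ j

/-- Convective flux with the boundary conventions `ûc_{1/2} = ûc_{N+1/2} = 0`. -/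
def ucB (N : ℕ) (u cP cM : ℕ → ℝ) (α : ℝ) (j : ℕ) : ℝ :=
  if 1 ≤ j ∧ j ≤ N - 1 then uc u cP cM α j else 0

/-- Diffusive flux with the boundary conventions `F̂_{1/2} = F̂_{N+1/2} = 0`. -/
def FhatB (N : ℕ) (Dm Dp cP cM : ℕ → ℝ) (αt Δx : ℝ) (j : ℕ) : ℝ :=
  if 1 ≤ j ∧ j ≤ N - 1 then Fhat Dm Dp cP cM αt Δx j else 0

/-- Velocity flux `û_{j+1/2}` with boundary conventions `û_{1/2} = û_{N+1/2} = 0`. -/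
def uhatB (N : ℕ) (u : ℕ → ℝ) (j : ℕ) : ℝ :=
  if 1 ≤ j ∧ j ≤ N - 1 then u j else 0

/-- The Euler-forward cell-average update
`r̄_j^{new} = r̄_j + λ(ûc_{j-1/2} - ûc_{j+1/2}) - λ(F̂_{j-1/2} - F̂_{j+1/2})
  + (Δt/2)·∑_{i=1,2}(c̃_j^i·q_j^i - z₁·r(x_j^i)·P_j^i)`. -/
def rbarnew (N : ℕ) (Φ cP cM u Dm Dp : ℕ → ℝ) (q ct P : ℕ → Fin 2 → ℝ)
    (α αt z1 Δx Δt : ℝ) (j : ℕ) : ℝ :=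
  rbar Φ cP cM j
    + (Δt / Δx) * (ucB N u cP cM α (j - 1) - ucB N u cP cM α j)
    - (Δt / Δx) * (FhatB N Dm Dp cP cM αt Δx (j - 1) - FhatB N Dm Dp cP cM αt Δx j)
    + (Δt / 2) * ∑ i : Fin 2, (ct j i * q j i - z1 * rG Φ cP cM j i * P j i)

theorem mu1_pos : 0 < mu1 := by
  unfold mu1; positivity

theorem mu2_pos : 0 < mu2 := by
  have : Real.sqrt 3 < 3 := by
    rw [Real.sqrt_lt' (by norm_num)]; norm_num
  unfold mu2; linarith

theorem mu1_add_mu2 : mu1 + mu2 = 1 := by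
  unfold mu1 mu2; ring

theorem cG_pos {cP cM : ℕ → ℝ} {j : ℕ} (hp : 0 < cP j) (hm : 0 < cM j) (i : Fin 2) :
    0 < cG cP cM j i := by
  have := mu1_pos; have := mu2_pos
  unfold cG; split_ifs <;> positivity

theorem min_mul_add_le {a b x y s t : ℝ} (hs : 0 ≤ s) (ht : 0 ≤ t) (hx : 0 ≤ x) (hy : 0 ≤ y) :
    min a b * (s * x + t * y) ≤ s * (x * a) + t * (y * b) := by
  nlinarith [mul_le_mul_of_nonneg_left (min_le_left a b) (mul_nonneg hs hx),
    mul_le_mul_of_nonneg_left (min_le_right a b) (mul_nonneg ht hy)]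

theorem min_mul_cG_le_rG {Φ cP cM : ℕ → ℝ} {j : ℕ} (hp : 0 ≤ cP j) (hm : 0 ≤ cM j)
    (i : Fin 2) : min (Φ (j - 1)) (Φ j) * cG cP cM j i ≤ rG Φ cP cM j i := by
  unfold cG rG
  split_ifs
  · exact min_mul_add_le mu1_pos.le mu2_pos.le hp hm
  · exact min_mul_add_le mu2_pos.le mu1_pos.le hp hm

theorem sum_rG (Φ cP cM : ℕ → ℝ) (j : ℕ) :
    ∑ i : Fin 2, rG Φ cP cM j i = 2 * rbar Φ cP cM j := by
  rw [Fin.sum_univ_two, rG, rG, if_pos rfl, if_neg Fin.zero_lt_one.ne', rbar]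
  linear_combination (cP j * Φ (j - 1) + cM j * Φ j) * mu1_add_mu2

theorem gauss_point_source_pos {Δt z1 P q ct c r m : ℝ} (hΔt : 0 < Δt) (hz1 : 0 ≤ z1)
    (hc : 0 < c) (hm : 0 < m) (hmc : m * c ≤ r) (hP : 6 * Δt * z1 * max P 0 ≤ 1)
    (hq1 : 0 ≤ q → 0 ≤ ct) (hq2 : q < 0 → ct = c ∧ 6 * Δt * (-q) < m) :
    0 < r / 6 + Δt / 2 * (ct * q - z1 * r * P) := by
  have hr : 0 < r := lt_of_lt_of_le (mul_pos hm hc) hmc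
  have hcomp : Δt / 2 * (z1 * r * P) ≤ r / 12 := by
    have := mul_le_mul_of_nonneg_left (le_max_left P 0) (by positivity : 0 ≤ Δt * z1 * r)
    nlinarith
  rcases le_or_gt 0 q with hq | hq
  · nlinarith [mul_nonneg (hq1 hq) hq]
  · obtain ⟨rfl, hqm⟩ := hq2 hq
    nlinarith [mul_lt_mul_of_pos_left hqm hc]

theorem source_share {Φ cP cM : ℕ → ℝ} {q ct P : ℕ → Fin 2 → ℝ} {z1 Δt : ℝ} {j : ℕ}
    (hΔt : 0 < Δt) (hz1 : 0 ≤ z1) (hΦl : 0 < Φ (j - 1)) (hΦr : 0 < Φ j)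
    (hp : 0 < cP j) (hm : 0 < cM j)
    (hP : ∀ i : Fin 2, 6 * Δt * z1 * max (P j i) 0 ≤ 1)
    (hq1 : ∀ i : Fin 2, 0 ≤ q j i → 0 ≤ ct j i)
    (hq2 : ∀ i : Fin 2, q j i < 0 →
      ct j i = cG cP cM j i ∧ 6 * Δt * (-q j i) < min (Φ (j - 1)) (Φ j)) :
    0 < rbar Φ cP cM j / 3
      + Δt / 2 * ∑ i : Fin 2, (ct j i * q j i - z1 * rG Φ cP cM j i * P j i) := by
  have hsplit : rbar Φ cP cM j / 3
        + Δt / 2 * ∑ i : Fin 2, (ct j i * q j i - z1 * rG Φ cP cM j i * P j i)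
      = ∑ i : Fin 2,
          (rG Φ cP cM j i / 6 + Δt / 2 * (ct j i * q j i - z1 * rG Φ cP cM j i * P j i)) := by
    rw [Finset.sum_add_distrib, ← Finset.sum_div, sum_rG, Finset.mul_sum]; ring
  rw [hsplit]
  exact Finset.sum_pos (fun i _ => gauss_point_source_pos hΔt hz1 (cG_pos hp hm i)
    (lt_min hΦl hΦr) (min_mul_cG_le_rG hp.le hm.le i) (hP i) (hq1 i) (hq2 i))
    Finset.univ_nonempty

theorem sub_mul_le_uc {u cP cM : ℕ → ℝ} {α : ℝ} {k : ℕ} (hα : 0 ≤ α) (hm : 0 ≤ cM k) :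
    (u k - α) * cP (k + 1) ≤ uc u cP cM α k := by
  unfold uc; nlinarith [mul_nonneg hα hm]

theorem uc_le_mul {u cP cM : ℕ → ℝ} {α : ℝ} {k : ℕ} (hu : u k ≤ α) (hp : 0 ≤ cP (k + 1)) :
    uc u cP cM α k ≤ α * cM k := by
  unfold uc; nlinarith [mul_nonneg (sub_nonneg.2 hu) hp]

theorem Fhat_eq_div {Dm Dp cP cM : ℕ → ℝ} {αt Δx : ℝ} (hΔx : Δx ≠ 0) (k : ℕ) :
    Fhat Dm Dp cP cM αt Δx k = Fhat Dm Dp cP cM αt 1 k / Δx := by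
  unfold Fhat; field_simp

theorem Fhat_one_le {Dm Dp cP cM : ℕ → ℝ} {αt : ℝ} {k : ℕ} (hDm : 0 ≤ Dm k)
    (hDmαt : Dm k / 2 ≤ αt) (hDp : 0 ≤ Dp k) (hp : 0 ≤ cP k) (hm : 0 ≤ cM k)
    (hp' : 0 ≤ cP (k + 1)) :
    Fhat Dm Dp cP cM αt 1 k ≤ αt * cP (k + 1) + Dp k / 2 * cM (k + 1) := by
  unfold Fhat
  nlinarith [mul_nonneg hDm hp, mul_nonneg (sub_nonneg.2 hDmαt) hm, mul_nonneg hDp hp']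

theorem neg_Fhat_one_le {Dm Dp cP cM : ℕ → ℝ} {αt : ℝ} {k : ℕ} (hDm : 0 ≤ Dm k)
    (hDp : 0 ≤ Dp k) (hDpαt : Dp k / 2 ≤ αt) (hm : 0 ≤ cM k) (hp' : 0 ≤ cP (k + 1))
    (hm' : 0 ≤ cM (k + 1)) :
    -Fhat Dm Dp cP cM αt 1 k ≤ Dm k / 2 * cP k + αt * cM k := by
  unfold Fhat
  nlinarith [mul_nonneg hDm hm, mul_nonneg hDp hm', mul_nonneg (sub_nonneg.2 hDpαt) hp']

theorem neg_le_lam_mul_ucB {N k : ℕ} {Φ u cP cM : ℕ → ℝ} {α Δx Δt : ℝ}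
    (hlam : 0 ≤ Δt / Δx) (hΦ : 0 ≤ Φ k) (hp : 0 ≤ cP (k + 1)) (hm : 1 ≤ k → 0 ≤ cM k)
    (hα : 1 ≤ k → k ≤ N - 1 → max (u k) 0 < α)
    (hCFL : 1 ≤ k → k ≤ N - 1 → 6 * (Δt / Δx) * (α - u k) ≤ Φ k) :
    -(cP (k + 1) * Φ k) / 6 ≤ Δt / Δx * ucB N u cP cM α k := by
  unfold ucB
  split_ifs with hk
  · have hα0 : 0 ≤ α := (hα hk.1 hk.2 |>.trans_le' (le_max_right _ _)).le
    have hflux := sub_mul_le_uc (u := u) (cP := cP) hα0 (hm hk.1)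
    have := mul_le_mul_of_nonneg_right (hCFL hk.1 hk.2) hp
    nlinarith [mul_le_mul_of_nonneg_left hflux hlam]
  · nlinarith [mul_nonneg hp hΦ]

theorem lam_mul_ucB_succ_le {N k : ℕ} {Φ u cP cM : ℕ → ℝ} {α Δx Δt : ℝ}
    (hlam : 0 ≤ Δt / Δx) (hΦ : 0 ≤ Φ (k + 1)) (hm : 0 ≤ cM (k + 1))
    (hp : k + 1 ≤ N - 1 → 0 ≤ cP (k + 2))
    (hα : k + 1 ≤ N - 1 → max (u (k + 1)) 0 < α)
    (hCFL : k + 1 ≤ N - 1 → 6 * α * (Δt / Δx) ≤ Φ (k + 1)) :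
    Δt / Δx * ucB N u cP cM α (k + 1) ≤ cM (k + 1) * Φ (k + 1) / 6 := by
  unfold ucB
  split_ifs with hk
  · have hu : u (k + 1) ≤ α := (hα hk.2 |>.trans_le' (le_max_left _ _)).le
    have hflux := uc_le_mul (cM := cM) hu (hp hk.2)
    have := mul_le_mul_of_nonneg_right (hCFL hk.2) hm
    nlinarith [mul_le_mul_of_nonneg_left hflux hlam]
  · nlinarith [mul_nonneg hm hΦ]

theorem lam_mul_FhatB_le {N k : ℕ} {Φ Dm Dp cP cM : ℕ → ℝ} {αt Δx Δt : ℝ}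
    (hΔx : 0 < Δx) (hΔt : 0 ≤ Δt) (hαt : 0 ≤ αt) (hp : 0 ≤ cP (k + 1)) (hm : 0 ≤ cM (k + 1))
    (hΦ : 6 * (Δt / Δx ^ 2) * αt ≤ Φ (k + 1))
    (hD : 1 ≤ k → k ≤ N - 1 → 0 ≤ Dm k ∧ Dm k / 2 ≤ αt ∧ 0 ≤ Dp k)
    (hc : 1 ≤ k → 0 ≤ cP k ∧ 0 ≤ cM k)
    (hCFL : 1 ≤ k → k ≤ N - 1 → Δt / Δx ^ 2 * (3 * Dp k + 6 * αt) ≤ Φ (k + 1)) :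
    Δt / Δx * FhatB N Dm Dp cP cM αt Δx k
      ≤ Δt / Δx ^ 2 * αt * cP (k + 1) + (Φ (k + 1) / 6 - Δt / Δx ^ 2 * αt) * cM (k + 1) := by
  have hΛ : 0 ≤ Δt / Δx ^ 2 := by positivity
  unfold FhatB
  split_ifs with hk
  · obtain ⟨hDm, hDmαt, hDp⟩ := hD hk.1 hk.2
    have hflux := Fhat_one_le hDm hDmαt hDp (hc hk.1).1 (hc hk.1).2 hp
    have hscale :
        Δt / Δx * Fhat Dm Dp cP cM αt Δx k = Δt / Δx ^ 2 * Fhat Dm Dp cP cM αt 1 k := by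
      rw [Fhat_eq_div hΔx.ne']; field_simp
    rw [hscale]
    have := mul_le_mul_of_nonneg_right (hCFL hk.1 hk.2) hm
    nlinarith [mul_le_mul_of_nonneg_left hflux hΛ]
  · nlinarith [mul_nonneg (mul_nonneg hΛ hαt) hp, mul_le_mul_of_nonneg_right hΦ hm]

theorem neg_lam_mul_FhatB_succ_le {N k : ℕ} {Φ Dm Dp cP cM : ℕ → ℝ} {αt Δx Δt : ℝ}
    (hΔx : 0 < Δx) (hΔt : 0 ≤ Δt) (hαt : 0 ≤ αt) (hp : 0 ≤ cP (k + 1)) (hm : 0 ≤ cM (k + 1))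
    (hΦ : 6 * (Δt / Δx ^ 2) * αt ≤ Φ k)
    (hD : k + 1 ≤ N - 1 → 0 ≤ Dm (k + 1) ∧ 0 ≤ Dp (k + 1) ∧ Dp (k + 1) / 2 ≤ αt)
    (hc : k + 1 ≤ N - 1 → 0 ≤ cP (k + 2) ∧ 0 ≤ cM (k + 2))
    (hCFL : k + 1 ≤ N - 1 → Δt / Δx ^ 2 * (3 * Dm (k + 1) + 6 * αt) ≤ Φ k) :
    -(Δt / Δx * FhatB N Dm Dp cP cM αt Δx (k + 1))
      ≤ (Φ k / 6 - Δt / Δx ^ 2 * αt) * cP (k + 1) + Δt / Δx ^ 2 * αt * cM (k + 1) := by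
  have hΛ : 0 ≤ Δt / Δx ^ 2 := by positivity
  unfold FhatB
  split_ifs with hk
  · obtain ⟨hDm, hDp, hDpαt⟩ := hD hk.2
    have hflux := neg_Fhat_one_le hDm hDp hDpαt hm (hc hk.2).1 (hc hk.2).2
    have hscale : Δt / Δx * Fhat Dm Dp cP cM αt Δx (k + 1)
        = Δt / Δx ^ 2 * Fhat Dm Dp cP cM αt 1 (k + 1) := by
      rw [Fhat_eq_div hΔx.ne']; field_simp
    rw [hscale]
    have := mul_le_mul_of_nonneg_right (hCFL hk.2) hp
    nlinarith [mul_le_mul_of_nonneg_left hflux hΛ]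
  · nlinarith [mul_nonneg (mul_nonneg hΛ hαt) hm, mul_le_mul_of_nonneg_right hΦ hp]

theorem positivity_of_cell_averages_1d
    (N : ℕ) (hN : 4 ≤ N) (Δx Δt : ℝ) (hΔx : 0 < Δx) (hΔt : 0 < Δt)
    (Φ cP cM u Dm Dp : ℕ → ℝ) (q ct P : ℕ → Fin 2 → ℝ) (α αt z1 : ℝ)
    (hΦ : ∀ j, j ≤ N → 0 < Φ j)
    (hDm : ∀ j, 1 ≤ j → j ≤ N - 1 → 0 ≤ Dm j)
    (hDp : ∀ j, 1 ≤ j → j ≤ N - 1 → 0 ≤ Dp j)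
    -- (i) all nodal concentration values strictly positive
    (hc : ∀ j, 1 ≤ j → j ≤ N → 0 < cP j ∧ 0 < cM j)
    -- (ii) α > max{u⁺_{j+1/2}, 0} at every interior node
    (hα : ∀ j, 1 ≤ j → j ≤ N - 1 → max (u j) 0 < α)
    -- (iii) α̃ > D_M/2
    (hαt : ∀ j, 1 ≤ j → j ≤ N - 1 → Dm j / 2 < αt ∧ Dp j / 2 < αt)
    -- (iv) 6αλ ≤ Φ_m and 6λ(α - u⁺_{j+1/2}) ≤ Φ_{j+1/2}
    (hCFL1 : ∀ j, 1 ≤ j → j ≤ N - 1 → 6 * α * (Δt / Δx) ≤ Φ j)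
    (hCFL2 : ∀ j, 1 ≤ j → j ≤ N - 1 → 6 * (Δt / Δx) * (α - u j) ≤ Φ j)
    -- (v) conditions on Λ = Δt/Δx²
    (hCFL3 : ∀ j, 1 ≤ j → j ≤ N - 1 → (Δt / Δx ^ 2) * (3 * Dm j + 6 * αt) ≤ Φ (j - 1))
    (hCFL4 : ∀ j, 2 ≤ j → j ≤ N → (Δt / Δx ^ 2) * (3 * Dp (j - 1) + 6 * αt) ≤ Φ j)
    (hCFL5 : ∀ j, j ≤ N → 6 * (Δt / Δx ^ 2) * αt ≤ Φ j)
    -- (vi) source conditions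
    (hz1 : 0 ≤ z1)
    (hP : ∀ j, 1 ≤ j → j ≤ N → ∀ i : Fin 2, 6 * Δt * z1 * max (P j i) 0 ≤ 1)
    (hq1 : ∀ j, 1 ≤ j → j ≤ N → ∀ i : Fin 2, 0 ≤ q j i → 0 ≤ ct j i)
    (hq2 : ∀ j, 1 ≤ j → j ≤ N → ∀ i : Fin 2, q j i < 0 →
      ct j i = cG cP cM j i ∧ 6 * Δt * (-q j i) < min (Φ (j - 1)) (Φ j)) :
    ∀ j, 1 ≤ j → j ≤ N → 0 < rbarnew N Φ cP cM u Dm Dp q ct P α αt z1 Δx Δt j := by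
  intro j hj1 hjN
  obtain ⟨k, rfl⟩ : ∃ k, j = k + 1 := ⟨j - 1, by omega⟩
  have hlam : 0 ≤ Δt / Δx := by positivity
  have hαt0 : 0 ≤ αt := by
    linarith [hDm 1 le_rfl (by omega), (hαt 1 le_rfl (by omega)).1]
  have hc0 : ∀ j, 1 ≤ j → j ≤ N → 0 ≤ cP j ∧ 0 ≤ cM j :=
    fun j h1 h2 => (hc j h1 h2).imp le_of_lt le_of_lt
  have hcj := hc (k + 1) hj1 hjN
  have hconvL := neg_le_lam_mul_ucB (N := N) (u := u) (cM := cM) hlam (hΦ k (by omega)).le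
    hcj.1.le (fun h => (hc0 k h (by omega)).2) (hα k) (hCFL2 k)
  have hconvR := lam_mul_ucB_succ_le (u := u) (cP := cP) hlam (hΦ (k + 1) hjN).le hcj.2.le
    (fun h => (hc0 (k + 2) (by omega) (by omega)).1) (hα (k + 1) hj1) (hCFL1 (k + 1) hj1)
  have hdiffL := lam_mul_FhatB_le (N := N) (Dm := Dm) hΔx hΔt.le hαt0 hcj.1.le hcj.2.le
    (hCFL5 (k + 1) hjN)
    (fun h1 h2 => ⟨hDm k h1 h2, (hαt k h1 h2).1.le, hDp k h1 h2⟩)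
    (fun h => hc0 k h (by omega))
    (fun h1 h2 => by simpa using hCFL4 (k + 1) (by omega) hjN)
  have hdiffR := neg_lam_mul_FhatB_succ_le (N := N) (Dp := Dp) hΔx hΔt.le hαt0 hcj.1.le
    hcj.2.le (hCFL5 k (by omega))
    (fun h => ⟨hDm (k + 1) hj1 h, hDp (k + 1) hj1 h, (hαt (k + 1) hj1 h).2.le⟩)
    (fun h => hc0 (k + 2) (by omega) (by omega))
    (fun h => by simpa using hCFL3 (k + 1) hj1 h)
  have hsrc := source_share hΔt hz1 (hΦ _ (by omega)) (hΦ _ hjN) hcj.1 hcj.2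
    (hP _ hj1 hjN) (hq1 _ hj1 hjN) (hq2 _ hj1 hjN)
  simp only [rbarnew, rbar, Nat.add_sub_cancel] at hsrc ⊢
  linarith

end DG1D
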